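/- The newly proposed AND-operator A_ν is sound: A_ν(ρ₁,…,ρ_M) ≥ 0 if and only if ρ_i ≥ 0 for all i. More precisely, A_ν(ρ) < 0 when min_i ρ_i < 0, A_ν(ρ) > 0 when min_i ρ_i > 0, and A_ν(ρ) = 0 when min_i ρ_i = 0. -/

import Mathlib

open Finset

/-- The minimum of the components of `ρ`. -/
noncomputable def rmin {M : ℕ} (hM : 0 < M) (ρ : Fin M → ℝ) : ℝ :=
  Finset.univ.inf' (by rwa [Finset.univ_nonempty_iff, ← Fin.pos_iff_nonempty]) ρ

/-- The maximum of the components of `ρ`. -/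
noncomputable def rmax {M : ℕ} (hM : 0 < M) (ρ : Fin M → ℝ) : ℝ :=
  Finset.univ.sup' (by rwa [Finset.univ_nonempty_iff, ← Fin.pos_iff_nonempty]) ρ

/-- The newly proposed AND-operator `A_ν`. -/
noncomputable def Anu (ν : ℝ) {M : ℕ} (hM : 0 < M) (ρ : Fin M → ℝ) : ℝ :=
  if rmin hM ρ < 0 then
    (∑ i, rmin hM ρ * Real.exp ((1 + ν) * ((ρ i - rmin hM ρ) / rmin hM ρ))) /
      (∑ i, Real.exp (ν * ((ρ i - rmin hM ρ) / rmin hM ρ)))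
  else if 0 < rmin hM ρ then
    (∑ i, ρ i * Real.exp (-ν * ((ρ i - rmin hM ρ) / rmin hM ρ))) /
      (∑ i, Real.exp (-ν * ((ρ i - rmin hM ρ) / rmin hM ρ)))
  else 0

section Sign

variable {M : ℕ} (hM : 0 < M) (ρ : Fin M → ℝ)

theorem rmin_le (i : Fin M) : rmin hM ρ ≤ ρ i :=
  inf'_le _ (mem_univ i)

theorem le_rmin_iff (a : ℝ) : a ≤ rmin hM ρ ↔ ∀ i, a ≤ ρ i := by
  simp [rmin, le_inf'_iff]

variable (ν : ℝ)

theorem Anu_neg_of_rmin_neg (h : rmin hM ρ < 0) : Anu ν hM ρ < 0 := by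
  rw [Anu, if_pos h]
  exact div_neg_of_neg_of_pos
    (sum_neg (fun i _ => mul_neg_of_neg_of_pos h (Real.exp_pos _)) ⟨⟨0, hM⟩, mem_univ _⟩)
    (sum_pos (fun i _ => Real.exp_pos _) ⟨⟨0, hM⟩, mem_univ _⟩)

theorem Anu_pos_of_rmin_pos (h : 0 < rmin hM ρ) : 0 < Anu ν hM ρ := by
  rw [Anu, if_neg h.not_gt, if_pos h]
  exact div_pos
    (sum_pos (fun i _ => mul_pos (h.trans_le (rmin_le hM ρ i)) (Real.exp_pos _))
      ⟨⟨0, hM⟩, mem_univ _⟩)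
    (sum_pos (fun i _ => Real.exp_pos _) ⟨⟨0, hM⟩, mem_univ _⟩)

theorem Anu_eq_zero_of_rmin_eq_zero (h : rmin hM ρ = 0) : Anu ν hM ρ = 0 := by
  simp [Anu, h]

theorem Anu_nonneg_iff : 0 ≤ Anu ν hM ρ ↔ 0 ≤ rmin hM ρ := by
  refine ⟨fun hA => not_lt.1 fun h => (Anu_neg_of_rmin_neg hM ρ ν h).not_ge hA, fun h => ?_⟩
  rcases h.lt_or_eq with h | h
  · exact (Anu_pos_of_rmin_pos hM ρ ν h).le
  · exact (Anu_eq_zero_of_rmin_eq_zero hM ρ ν h.symm).ge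

end Sign

theorem Anu_sound_general (ν : ℝ) (M : ℕ) (hM : 0 < M) (ρ : Fin M → ℝ) :
    ((0 ≤ Anu ν hM ρ ↔ ∀ i, 0 ≤ ρ i) ∧
      (rmin hM ρ < 0 → Anu ν hM ρ < 0) ∧
      (0 < rmin hM ρ → 0 < Anu ν hM ρ) ∧
      (rmin hM ρ = 0 → Anu ν hM ρ = 0)) :=
  ⟨(Anu_nonneg_iff hM ρ ν).trans (le_rmin_iff hM ρ 0), Anu_neg_of_rmin_neg hM ρ ν,
    Anu_pos_of_rmin_pos hM ρ ν, Anu_eq_zero_of_rmin_eq_zero hM ρ ν⟩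

/-- The new AND-operator is sound: it is negative, zero, or positive according to the
sign of the minimal argument. -/
theorem Anu_sound (ν : ℝ) (hν : 0 < ν) (M : ℕ) (hM : 0 < M) (ρ : Fin M → ℝ) :
    ((0 ≤ Anu ν hM ρ ↔ ∀ i, 0 ≤ ρ i) ∧
      (rmin hM ρ < 0 → Anu ν hM ρ < 0) ∧
      (0 < rmin hM ρ → 0 < Anu ν hM ρ) ∧
      (rmin hM ρ = 0 → Anu ν hM ρ = 0)) :=
  Anu_sound_general ν M hM ρ
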